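/- arXiv:0906.2208 — 2 statements merged into one kernel-verified Lean document; each statement's English description precedes it below -/
import Mathlib

section
/- Let ω ∈ (0,∞)ⁿ be a weight vector with inverted weights φ = (1/ω₁,…,1/ωₙ). Let r₁,…,r_d ∈ ℝⁿ and C = {x ∈ ℝⁿ : (rᵢ, x) ≥ 0 for all i ∈ [d]}. Fix an index i and suppose (rᵢ, r_j)_φ ≤ 0 for all j ≠ i. If y ∈ ℝⁿ satisfies (rᵢ, y) ≤ 0, then the weighted projection π_C(y; ω) lies in the wall H = {x : (rᵢ, x) = 0}. -/
/-!
If the projection `z` of `y` satisfied `(rᵢ, z) = c > 0`, push it along `-t φ ⊙ rᵢ`, the direction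
in which `(rᵢ, ·)` decreases fastest for the `ω`-metric. This changes `(rⱼ, z)` by
`-t (rᵢ, rⱼ)_φ ≥ 0` for `j ≠ i`, so for `0 < t` with `t (rᵢ, rᵢ)_φ ≤ c` the point stays in `C`,
while its squared `ω`-distance to `y` changes by `-2t(c - (rᵢ, y)) + t² (rᵢ, rᵢ)_φ ≤ -t c < 0`,
contradicting minimality.
-/

open Finset

section

variable {ι : Type*} [Fintype ι]

theorem sum_mul_sub_mul_div (a b z ω : ι → ℝ) (t : ℝ) :
    ∑ k, a k * (z k - t * (b k / ω k)) = ∑ k, a k * z k - t * ∑ k, 1 / ω k * b k * a k := by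
  rw [mul_sum, ← sum_sub_distrib]
  exact sum_congr rfl fun k _ => by ring

theorem sum_mul_sub_mul_div_sub_sq {ω : ι → ℝ} (hω : ∀ k, ω k ≠ 0) (b y z : ι → ℝ) (t : ℝ) :
    ∑ k, ω k * (z k - t * (b k / ω k) - y k) ^ 2 =
      ∑ k, ω k * (z k - y k) ^ 2 - 2 * t * (∑ k, b k * z k - ∑ k, b k * y k)
        + t ^ 2 * ∑ k, 1 / ω k * b k * b k := by
  simp only [mul_sum, ← sum_sub_distrib, ← sum_add_distrib]
  refine sum_congr rfl fun k _ => ?_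
  field_simp [hω k]
  ring

end

/-- If `(rᵢ, rⱼ)_φ ≤ 0` for all `j ≠ i` (φ the inverted weights) and
`(rᵢ, y) ≤ 0`, then the weighted projection of `y` onto the chamber
`C = {x : (rⱼ,x) ≥ 0 ∀j}` lies in the wall `H = {x : (rᵢ,x) = 0}`. -/
theorem stmt_2 (n d : ℕ) (ω : Fin n → ℝ) (hω : ∀ k, 0 < ω k)
    (r : Fin d → Fin n → ℝ) (i : Fin d)
    (hneg : ∀ j, j ≠ i → ∑ k, (1 / ω k) * r i k * r j k ≤ 0)
    (y : Fin n → ℝ) (hy : ∑ k, r i k * y k ≤ 0)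
    (z : Fin n → ℝ)
    (hzC : ∀ j, 0 ≤ ∑ k, r j k * z k)
    (hzmin : ∀ x : Fin n → ℝ, (∀ j, 0 ≤ ∑ k, r j k * x k) →
      ∑ k, ω k * (z k - y k) ^ 2 ≤ ∑ k, ω k * (x k - y k) ^ 2) :
    ∑ k, r i k * z k = 0 := by
  by_contra hne
  set c := ∑ k, r i k * z k
  have hc : 0 < c := (hzC i).lt_of_ne' hne
  set N := ∑ k, 1 / ω k * r i k * r i k
  have hN : 0 ≤ N := sum_nonneg fun k _ => by
    rw [mul_assoc]
    exact mul_nonneg (one_div_pos.2 (hω k)).le (mul_self_nonneg _)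
  set t := c / (N + 1)
  have ht : 0 < t := by positivity
  have htN : t * N ≤ c := by
    rw [div_mul_eq_mul_div, div_le_iff₀ (by positivity)]
    nlinarith
  have hxC : ∀ j, 0 ≤ ∑ k, r j k * (z k - t * (r i k / ω k)) := by
    intro j
    rw [sum_mul_sub_mul_div]
    rcases eq_or_ne j i with rfl | hji
    · linarith
    · nlinarith [hneg j hji, hzC j]
  have hmin := hzmin _ hxC
  rw [sum_mul_sub_mul_div_sub_sq (fun k => (hω k).ne')] at hmin
  nlinarith
end

section
/- Let ω ∈ (0,∞)ⁿ with φ = (1/ω₁,…,1/ωₙ), let r₁,…,r_d ∈ ℝⁿ, C = {x : (rᵢ,x) ≥ 0 ∀i}, and fix i with (rᵢ, r_j)_φ ≤ 0 for all j ≠ i. If y satisfies (rᵢ, y) ≤ 0 and H = {x : (rᵢ,x) = 0}, then π_C(y; ω) = π_C(π_H(y; ω); ω), i.e., projecting y onto C with weights ω factors through the weighted projection onto the wall H. -/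
/-!
Rescaling coordinates by `√ω` turns the `ω`-weighted geometry into the Euclidean one; the walls
become `{x | ⟪aⱼ, x⟫ = 0}` with `aⱼ = rⱼ / ω`, whose Gram matrix is `((rᵢ, rⱼ)_φ)`.
The wall projection moves `y` along the normal: `q - y = c • aᵢ` with `c ≥ 0` because
`⟪aᵢ, y⟫ ≤ 0`. The projection `z` of `q` onto the chamber lies on the wall, `⟪aᵢ, z⟫ = 0`: otherwise
sliding it along `-aᵢ` back to the wall keeps it in the chamber (as `⟪aᵢ, aⱼ⟫ ≤ 0`) and brings it
closer to `q`. Hence for `x` in the chamber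
`⟪y - z, x - z⟫ = ⟪q - z, x - z⟫ - c ⟪aᵢ, x⟫ ≤ 0`, so `z` is also the projection of `y`.
-/

open RealInnerProductSpace

theorem IsMinOn.norm_sub_eq_iInf {F : Type*} [SeminormedAddCommGroup F] {K : Set F} {u v : F}
    (hv : v ∈ K) (h : IsMinOn (‖· - u‖) K v) : ‖u - v‖ = ⨅ w : K, ‖u - w‖ := by
  have : Nonempty K := ⟨⟨v, hv⟩⟩
  refine le_antisymm (le_ciInf fun w => ?_) (ciInf_le ⟨0, ?_⟩ (⟨v, hv⟩ : K))
  · simpa only [norm_sub_rev u] using isMinOn_iff.1 h w w.2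
  · rintro _ ⟨w, rfl⟩
    exact norm_nonneg _

section
variable {E : Type*} [NormedAddCommGroup E] [InnerProductSpace ℝ E]

def chamber {ι : Type*} (a : ι → E) : Set E := {x | ∀ j, 0 ≤ ⟪a j, x⟫}

theorem convex_chamber {ι : Type*} (a : ι → E) : Convex ℝ (chamber a) := by
  simp only [chamber, Set.ofPred_forall]
  exact convex_iInter fun j => convex_halfSpace_ge (innerₛₗ ℝ (a j)).isLinear 0

theorem IsMinOn.inner_sub_le_zero {K : Set E} (hK : Convex ℝ K) {u v : E} (hv : v ∈ K)
    (h : IsMinOn (‖· - u‖) K v) : ∀ w ∈ K, ⟪u - v, w - v⟫ ≤ 0 :=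
  (norm_eq_iInf_iff_real_inner_le_zero hK hv).1 (h.norm_sub_eq_iInf hv)

theorem eq_of_inner_sub_le_zero {K : Set E} {u v₁ v₂ : E} (h₁ : v₁ ∈ K) (h₂ : v₂ ∈ K)
    (hv₁ : ∀ w ∈ K, ⟪u - v₁, w - v₁⟫ ≤ 0) (hv₂ : ∀ w ∈ K, ⟪u - v₂, w - v₂⟫ ≤ 0) :
    v₁ = v₂ := by
  have hsum : ‖v₁ - v₂‖ ^ 2 = ⟪u - v₁, v₂ - v₁⟫ + ⟪u - v₂, v₁ - v₂⟫ := by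
    rw [← real_inner_self_eq_norm_sq, ← neg_sub v₁ v₂, inner_neg_right, ← sub_eq_neg_add,
      ← inner_sub_left]
    congr 1
    abel
  rw [← sub_eq_zero, ← norm_eq_zero, ← sq_eq_zero_iff]
  exact le_antisymm (hsum ▸ add_nonpos (hv₁ v₂ h₂) (hv₂ v₁ h₁)) (sq_nonneg _)

theorem exists_nonneg_smul_eq_sub_of_isMinOn_orthogonal {a y q : E} (hy : ⟪a, y⟫ ≤ 0)
    (hq : q ∈ (ℝ ∙ a)ᗮ) (hmin : IsMinOn (‖· - y‖) (ℝ ∙ a)ᗮ q) :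
    ∃ c : ℝ, 0 ≤ c ∧ q - y = c • a := by
  have hperp : y - q ∈ (ℝ ∙ a)ᗮᗮ := fun w hw => by
    rw [real_inner_comm]
    exact (Submodule.norm_eq_iInf_iff_real_inner_eq_zero _ hq).1 (hmin.norm_sub_eq_iInf hq) w hw
  rw [Submodule.orthogonal_orthogonal, Submodule.mem_span_singleton] at hperp
  obtain ⟨c, hc⟩ := hperp
  rcases eq_or_ne a 0 with rfl | ha
  · exact ⟨0, le_rfl, by rw [smul_zero, ← neg_sub, ← hc, smul_zero, neg_zero]⟩
  refine ⟨-c, ?_, by rw [neg_smul, hc, neg_sub]⟩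
  have hqa : ⟪a, q⟫ = 0 := Submodule.mem_orthogonal_singleton_iff_inner_right.1 hq
  have : c * ‖a‖ ^ 2 ≤ 0 := by
    rw [← real_inner_self_eq_norm_sq, ← inner_smul_right, hc, inner_sub_right, hqa, sub_zero]
    exact hy
  have hnorm : 0 < ‖a‖ ^ 2 := sq_pos_iff.2 (norm_ne_zero_iff.2 ha)
  nlinarith

theorem inner_eq_zero_of_isMinOn_chamber {ι : Type*} {a : ι → E} {i : ι}
    (hneg : ∀ j ≠ i, ⟪a i, a j⟫ ≤ 0) {q z : E} (hq : ⟪a i, q⟫ = 0) (hz : z ∈ chamber a)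
    (hmin : IsMinOn (‖· - q‖) (chamber a) z) : ⟪a i, z⟫ = 0 := by
  rcases eq_or_ne (a i) 0 with ha | ha
  · rw [ha, inner_zero_left]
  have hnorm : 0 < ‖a i‖ ^ 2 := sq_pos_iff.2 (norm_ne_zero_iff.2 ha)
  set s := ⟪a i, z⟫ / ‖a i‖ ^ 2
  have hs : 0 ≤ s := div_nonneg (hz i) hnorm.le
  have hsa : s * ‖a i‖ ^ 2 = ⟪a i, z⟫ := div_mul_cancel₀ _ hnorm.ne'
  have hmem : z - s • a i ∈ chamber a := fun j => by
    rw [inner_sub_right, inner_smul_right]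
    obtain rfl | hj := eq_or_ne j i
    · rw [real_inner_self_eq_norm_sq, hsa, sub_self]
    · rw [real_inner_comm (a i) (a j)]
      linarith [hz j, mul_nonneg hs (neg_nonneg.2 (hneg j hj))]
  have hvar := hmin.inner_sub_le_zero (convex_chamber a) hz _ hmem
  rw [sub_sub_cancel_left, inner_neg_right, inner_smul_right, inner_sub_left, real_inner_comm,
    hq, real_inner_comm] at hvar
  have hs0 : s = 0 := by
    refine le_antisymm (not_lt.1 fun hpos => ?_) hs
    rw [← hsa] at hvar
    nlinarith [mul_pos (mul_pos hpos hpos) hnorm]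
  rw [← hsa, hs0, zero_mul]

theorem eq_of_isMinOn_chamber_of_isMinOn_orthogonal {ι : Type*} {a : ι → E} {i : ι}
    (hneg : ∀ j ≠ i, ⟪a i, a j⟫ ≤ 0) {y q p z : E} (hy : ⟪a i, y⟫ ≤ 0)
    (hq : q ∈ (ℝ ∙ a i)ᗮ) (hqmin : IsMinOn (‖· - y‖) (ℝ ∙ a i)ᗮ q)
    (hp : p ∈ chamber a) (hpmin : IsMinOn (‖· - y‖) (chamber a) p)
    (hz : z ∈ chamber a) (hzmin : IsMinOn (‖· - q‖) (chamber a) z) : p = z := by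
  obtain ⟨c, hc, hqy⟩ := exists_nonneg_smul_eq_sub_of_isMinOn_orthogonal hy hq hqmin
  have hzi : ⟪a i, z⟫ = 0 := inner_eq_zero_of_isMinOn_chamber hneg
    (Submodule.mem_orthogonal_singleton_iff_inner_right.1 hq) hz hzmin
  refine eq_of_inner_sub_le_zero hp hz (hpmin.inner_sub_le_zero (convex_chamber a) hp)
    fun w hw => ?_
  have hzq := hzmin.inner_sub_le_zero (convex_chamber a) hz w hw
  calc ⟪y - z, w - z⟫ = ⟪q - z, w - z⟫ - c * ⟪a i, w⟫ := by
        rw [← sub_sub_sub_cancel_left z y q, inner_sub_left, hqy, real_inner_smul_left,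
          inner_sub_right (a i), hzi, sub_zero]
    _ ≤ 0 := by nlinarith [hw i]
end

section
variable {ι : Type*} {ω : ι → ℝ}

noncomputable def weightedToEuclidean (ω : ι → ℝ) (x : ι → ℝ) : EuclideanSpace ℝ ι :=
  WithLp.toLp 2 fun k => √(ω k) * x k

theorem inner_weightedToEuclidean [Fintype ι] (hω : ∀ k, 0 ≤ ω k) (u v : ι → ℝ) :
    ⟪weightedToEuclidean ω u, weightedToEuclidean ω v⟫ = ∑ k, ω k * u k * v k := by
  simp only [weightedToEuclidean, PiLp.inner_apply, RCLike.inner_apply, conj_trivial]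
  refine Finset.sum_congr rfl fun k _ => ?_
  linear_combination (u k * v k) * Real.mul_self_sqrt (hω k)

theorem weightedToEuclidean_sub (u v : ι → ℝ) :
    weightedToEuclidean ω u - weightedToEuclidean ω v = weightedToEuclidean ω (u - v) := by
  ext k
  simp [weightedToEuclidean, mul_sub]

theorem norm_weightedToEuclidean_sub_sq [Fintype ι] (hω : ∀ k, 0 ≤ ω k) (u v : ι → ℝ) :
    ‖weightedToEuclidean ω u - weightedToEuclidean ω v‖ ^ 2 = ∑ k, ω k * (u k - v k) ^ 2 := by
  rw [← real_inner_self_eq_norm_sq, weightedToEuclidean_sub, inner_weightedToEuclidean hω]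
  simp only [Pi.sub_apply, mul_assoc, sq]

theorem inner_weightedToEuclidean_div [Fintype ι] (hω : ∀ k, 0 < ω k) (r x : ι → ℝ) :
    ⟪weightedToEuclidean ω (r / ω), weightedToEuclidean ω x⟫ = ∑ k, r k * x k := by
  rw [inner_weightedToEuclidean fun k => (hω k).le]
  refine Finset.sum_congr rfl fun k _ => ?_
  rw [Pi.div_apply, mul_div_cancel₀ _ (hω k).ne']

theorem weightedToEuclidean_injective (hω : ∀ k, 0 < ω k) :
    Function.Injective (weightedToEuclidean ω) := fun _ _ h => funext fun k =>
  mul_left_cancel₀ (Real.sqrt_pos.2 (hω k)).ne' (congrArg (· k) h)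

theorem weightedToEuclidean_surjective (hω : ∀ k, 0 < ω k) :
    Function.Surjective (weightedToEuclidean ω) := fun w =>
  ⟨fun k => w k / √(ω k), by
    ext k
    exact mul_div_cancel₀ _ (Real.sqrt_pos.2 (hω k)).ne'⟩

theorem isMinOn_weightedToEuclidean [Fintype ι] (hω : ∀ k, 0 < ω k)
    {s : Set (EuclideanSpace ℝ ι)} {u v : ι → ℝ}
    (h : ∀ x, weightedToEuclidean ω x ∈ s →
      ∑ k, ω k * (u k - v k) ^ 2 ≤ ∑ k, ω k * (x k - v k) ^ 2) :
    IsMinOn (‖· - weightedToEuclidean ω v‖) s (weightedToEuclidean ω u) := by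
  refine isMinOn_iff.2 fun w hw => ?_
  obtain ⟨x, rfl⟩ := weightedToEuclidean_surjective hω w
  rw [← sq_le_sq₀ (norm_nonneg _) (norm_nonneg _),
    norm_weightedToEuclidean_sub_sq (fun k => (hω k).le),
    norm_weightedToEuclidean_sub_sq (fun k => (hω k).le)]
  exact h x hw
end

/-- Under the hypotheses of Lemma 2 (projection lemma), the weighted
projection of `y` onto `C` factors through the weighted projection onto
the wall `H = {x : (rᵢ,x) = 0}`:
`π_C(y;ω) = π_C(π_H(y;ω);ω)`. -/
theorem stmt_3 (n d : ℕ) (ω : Fin n → ℝ) (hω : ∀ k, 0 < ω k)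
    (r : Fin d → Fin n → ℝ) (i : Fin d)
    (hneg : ∀ j, j ≠ i → ∑ k, (1 / ω k) * r i k * r j k ≤ 0)
    (y : Fin n → ℝ) (hy : ∑ k, r i k * y k ≤ 0)
    -- `q = π_H(y;ω)` : the weighted projection of `y` onto the wall `H`
    (q : Fin n → ℝ) (hqH : ∑ k, r i k * q k = 0)
    (hqmin : ∀ x : Fin n → ℝ, (∑ k, r i k * x k = 0) →
      ∑ k, ω k * (q k - y k) ^ 2 ≤ ∑ k, ω k * (x k - y k) ^ 2)
    -- `p = π_C(y;ω)` : the weighted projection of `y` onto the chamber `C`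
    (p : Fin n → ℝ) (hpC : ∀ j, 0 ≤ ∑ k, r j k * p k)
    (hpmin : ∀ x : Fin n → ℝ, (∀ j, 0 ≤ ∑ k, r j k * x k) →
      ∑ k, ω k * (p k - y k) ^ 2 ≤ ∑ k, ω k * (x k - y k) ^ 2)
    -- `z = π_C(q;ω)` : the weighted projection of `q` onto `C`
    (z : Fin n → ℝ) (hzC : ∀ j, 0 ≤ ∑ k, r j k * z k)
    (hzmin : ∀ x : Fin n → ℝ, (∀ j, 0 ≤ ∑ k, r j k * x k) →
      ∑ k, ω k * (z k - q k) ^ 2 ≤ ∑ k, ω k * (x k - q k) ^ 2) :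
    p = z := by
  set T := weightedToEuclidean ω
  set a : Fin d → EuclideanSpace ℝ (Fin n) := fun j => T (r j / ω)
  have ha : ∀ j x, ⟪a j, T x⟫ = ∑ k, r j k * x k := fun _ _ =>
    inner_weightedToEuclidean_div hω _ _
  have hchamber : ∀ x, T x ∈ chamber a ↔ ∀ j, 0 ≤ ∑ k, r j k * x k := fun x => by
    simp only [chamber, Set.mem_ofPred_eq, ha]
  have hwall : ∀ x, T x ∈ (ℝ ∙ a i)ᗮ ↔ ∑ k, r i k * x k = 0 := fun x => by
    rw [Submodule.mem_orthogonal_singleton_iff_inner_right, ha]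
  have hgram : ∀ j ≠ i, ⟪a i, a j⟫ ≤ 0 := fun j hj => by
    convert hneg j hj using 1
    rw [ha]
    exact Finset.sum_congr rfl fun k _ => by rw [Pi.div_apply]; ring
  refine weightedToEuclidean_injective hω <| eq_of_isMinOn_chamber_of_isMinOn_orthogonal hgram
    ((ha i y).trans_le hy) ((hwall q).2 hqH)
    (isMinOn_weightedToEuclidean hω fun x hx => hqmin x ((hwall x).1 hx))
    ((hchamber p).2 hpC) (isMinOn_weightedToEuclidean hω fun x hx => hpmin x ((hchamber x).1 hx))
    ((hchamber z).2 hzC) (isMinOn_weightedToEuclidean hω fun x hx => hzmin x ((hchamber x).1 hx))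
end
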